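/- arXiv:2511.05332 — 2 statements merged into one kernel-verified Lean document; each statement's English description precedes it below -/
import Mathlib

section
/- For any natural number n ≥ 1, the sum over σ in S_n of sign(σ)/(fix(σ)+1) equals (-1)^(n+1)·n/(n+1). -/
/-!
Expanding the determinant of the matrix with `x` on the diagonal and `1` elsewhere as a sum over
permutations gives `∑ σ, sign σ * x ^ fix σ`; writing the matrix as `(x - 1) • (1 + u vᵀ)` and
applying the matrix determinant lemma gives `(x - 1) ^ n + n (x - 1) ^ (n - 1)`. Integrating this
polynomial identity over `[0, 1]` turns `x ^ k` into `1 / (k + 1)`, and the right-hand side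
integrates to `(-1) ^ n / (n + 1) + (-1) ^ (n - 1)`.
-/

open Finset Matrix Polynomial

variable {K : Type*} [Field K]

theorem det_of_ite_eq_of_ne {ι : Type*} [Fintype ι] [DecidableEq ι] {a b : K} (hab : a ≠ b) :
    (of fun i j : ι => if i = j then a else b).det =
      (a - b) ^ Fintype.card ι + Fintype.card ι * b * (a - b) ^ (Fintype.card ι - 1) := by
  have hab' : a - b ≠ 0 := sub_ne_zero.mpr hab
  have hM : of (fun i j : ι => if i = j then a else b) = (a - b) • ((1 : Matrix ι ι K) +
      replicateCol Unit (fun _ : ι => b / (a - b)) * replicateRow Unit (fun _ : ι => (1 : K))) := by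
    ext i j
    simp only [of_apply, Matrix.smul_apply, Matrix.add_apply, Matrix.one_apply, Matrix.mul_apply,
      univ_unique, replicateCol_apply, replicateRow_apply, sum_singleton, mul_one, smul_eq_mul]
    split_ifs <;> field_simp <;> ring
  rw [hM, det_smul, det_one_add_replicateCol_mul_replicateRow]
  simp only [dotProduct, one_mul, sum_const, card_univ, nsmul_eq_mul]
  cases Fintype.card ι with
  | zero => simp
  | succ k =>
    rw [Nat.add_sub_cancel, pow_succ]
    push_cast
    field_simp

theorem sum_sign_mul_pow_card_fixed_eq_det {R : Type*} [CommRing R] {ι : Type*} [Fintype ι]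
    [DecidableEq ι] (x : R) :
    ∑ σ : Equiv.Perm ι, ((Equiv.Perm.sign σ : ℤ) : R) * x ^ #{i | σ i = i} =
      (of fun i j : ι => if i = j then x else 1).det := by
  rw [det_apply]
  refine sum_congr rfl fun σ _ => ?_
  rw [Units.smul_def, zsmul_eq_mul]
  simp [prod_ite]

theorem sum_sign_mul_X_pow_card_fixed [CharZero K] (ι : Type*) [Fintype ι] [DecidableEq ι] :
    ∑ σ : Equiv.Perm ι, C ((Equiv.Perm.sign σ : ℤ) : K) * X ^ #{i | σ i = i} =
      (X - 1 : K[X]) ^ Fintype.card ι +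
        (Fintype.card ι : K[X]) * (X - 1) ^ (Fintype.card ι - 1) := by
  refine eq_of_infinite_eval_eq _ _ (Set.Infinite.mono (s := {1}ᶜ) (fun x hx => ?_)
    (Set.finite_singleton 1).infinite_compl)
  simp only [Set.mem_ofPred_eq, eval_finsetSum, eval_mul, eval_C, eval_pow, eval_X, eval_add,
    eval_sub, eval_one, eval_natCast]
  rw [sum_sign_mul_pow_card_fixed_eq_det, det_of_ite_eq_of_ne hx, mul_one]

/-- `p ↦ ∫₀¹ p`, defined algebraically by `X ^ k ↦ 1 / (k + 1)`. -/
noncomputable def unitIntegral : K[X] →ₗ[K] K :=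
  lsum fun k => ((k + 1 : K))⁻¹ • LinearMap.id

theorem unitIntegral_monomial (k : ℕ) (c : K) : unitIntegral (monomial k c) = c / (k + 1) := by
  simp [unitIntegral, div_eq_inv_mul]

theorem unitIntegral_derivative [CharZero K] (p : K[X]) :
    unitIntegral (derivative p) = p.eval 1 - p.eval 0 := by
  induction p using Polynomial.induction_on' with
  | add p q hp hq => simp only [map_add, hp, hq, eval_add]; ring
  | monomial k c =>
    cases k with
    | zero => simp
    | succ k =>
      rw [derivative_monomial_succ, unitIntegral_monomial]
      field_simp
      simp

theorem unitIntegral_X_sub_one_pow [CharZero K] (m : ℕ) :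
    unitIntegral ((X - 1 : K[X]) ^ m) = (-1) ^ m / (m + 1) := by
  have h : (X - 1 : K[X]) ^ m = C ((m + 1 : K)⁻¹) * derivative ((X - C 1) ^ (m + 1)) := by
    rw [derivative_X_sub_C_pow, ← mul_assoc, ← C_mul, Nat.add_sub_cancel, Nat.cast_add_one,
      inv_mul_cancel₀ (Nat.cast_add_one_ne_zero m), C_1, one_mul]
  rw [h, ← smul_eq_C_mul, map_smul, unitIntegral_derivative]
  simp only [eval_pow, eval_sub, eval_X, eval_C, sub_self, zero_pow (Nat.succ_ne_zero m), zero_sub,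
    smul_eq_mul]
  ring

theorem sum_k1 (n : ℕ) (hn : 1 ≤ n) :
    (∑ σ : Equiv.Perm (Fin n),
      ((Equiv.Perm.sign σ : ℤ) : ℚ) /
        ((Finset.univ.filter fun i => σ i = i).card + 1 : ℚ))
      = (-1 : ℚ) ^ (n + 1) * n / (n + 1) := by
  obtain ⟨m, rfl⟩ := Nat.exists_eq_add_of_le' hn
  have h := congrArg unitIntegral (sum_sign_mul_X_pow_card_fixed (K := ℚ) (Fin (m + 1)))
  simp only [map_sum, C_mul_X_pow_eq_monomial, unitIntegral_monomial] at h
  rw [h, map_add, ← C_eq_natCast, ← smul_eq_C_mul, map_smul, unitIntegral_X_sub_one_pow,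
    unitIntegral_X_sub_one_pow, Fintype.card_fin, Nat.add_sub_cancel, smul_eq_mul]
  push_cast
  field_simp
  ring
end

section
/- For any natural numbers n ≥ 1, k ≥ 1 and real x, Σ_{σ ∈ S_n} sign(σ)·(fix(σ))!/(fix(σ)+k)!·x^(fix(σ)+k) equals the k-fold iterated integral from 0 of the polynomial (u-1+n)(u-1)^(n-1), evaluated at x. -/
noncomputable def Pint (n : ℕ) : ℕ → ℝ → ℝ
  | 0 => fun u => (u - 1 + n) * (u - 1) ^ (n - 1)
  | (j + 1) => fun x => ∫ u in (0:ℝ)..x, Pint n j u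

/-!
Expanding the determinant of the matrix with `x` on the diagonal and `1` elsewhere as a sum over
permutations gives `∑ σ, sign σ * x ^ fix σ`; this matrix is `(x - 1) • 1 + J` with `J` the rank-one
all-ones matrix, so its determinant is `(x - 1) ^ n + n (x - 1) ^ (n - 1)`, the characteristic
polynomial of `-J` at `x - 1`. Integrating `k` times termwise from `0` turns `x ^ m` into
`m! / (m + k)! * x ^ (m + k)`.
-/

open Finset Matrix Nat Polynomial

section Determinant

variable {ι R : Type*} [Fintype ι] [DecidableEq ι] [CommRing R]

theorem Matrix.det_of_ite_eq_sum_sign_mul_pow_card_fixed (a : R) :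
    (Matrix.of fun i j : ι => if i = j then a else 1).det =
      ∑ σ : Equiv.Perm ι, (Equiv.Perm.sign σ : R) * a ^ #{i | σ i = i} := by
  rw [Matrix.det_apply']
  refine sum_congr rfl fun σ _ => ?_
  simp only [Matrix.of_apply, prod_ite, prod_const, one_pow, mul_one]

theorem Matrix.det_of_ite (a : R) :
    (Matrix.of fun i j : ι => if i = j then a else 1).det =
      (a - 1) ^ Fintype.card ι + Fintype.card ι * (a - 1) ^ (Fintype.card ι - 1) := by
  have hM : (Matrix.of fun i j : ι => if i = j then a else 1) =
      scalar ι (a - 1) - vecMulVec (fun _ => -1) (fun _ => 1) := by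
    ext i j
    by_cases h : i = j <;> simp [h, vecMulVec_apply]
  rw [hM, ← eval_charpoly, charpoly_vecMulVec]
  simp [dotProduct, sub_eq_add_neg]

end Determinant

theorem sum_sign_mul_pow_card_fixed {R : Type*} [CommRing R] {n : ℕ} (hn : 1 ≤ n) (a : R) :
    ∑ σ : Equiv.Perm (Fin n), (Equiv.Perm.sign σ : R) * a ^ #{i | σ i = i} =
      (a - 1 + n) * (a - 1) ^ (n - 1) := by
  rw [← Matrix.det_of_ite_eq_sum_sign_mul_pow_card_fixed, Matrix.det_of_ite, Fintype.card_fin]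
  obtain ⟨m, rfl⟩ := Nat.exists_eq_add_of_le' hn
  simp only [Nat.add_sub_cancel, pow_succ]
  ring

theorem integral_factorial_div_mul_pow (m k : ℕ) (x : ℝ) :
    ∫ u in (0 : ℝ)..x, (m ! : ℝ) / (m + k)! * u ^ (m + k) =
      (m ! : ℝ) / (m + (k + 1))! * x ^ (m + (k + 1)) := by
  rw [intervalIntegral.integral_const_mul, integral_pow, ← add_assoc, Nat.factorial_succ]
  push_cast
  field_simp
  ring

theorem integral_sum_mul_factorial_div_mul_pow {α : Type*} (s : Finset α) (c : α → ℝ)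
    (m : α → ℕ) (k : ℕ) (x : ℝ) :
    ∫ u in (0 : ℝ)..x, ∑ a ∈ s, c a * (m a)! / (m a + k)! * u ^ (m a + k) =
      ∑ a ∈ s, c a * (m a)! / (m a + (k + 1))! * x ^ (m a + (k + 1)) := by
  rw [intervalIntegral.integral_finsetSum fun a _ =>
    (Continuous.intervalIntegrable (by fun_prop) _ _)]
  refine sum_congr rfl fun a _ => ?_
  simp only [mul_div_assoc, mul_assoc, intervalIntegral.integral_const_mul,
    ← integral_factorial_div_mul_pow]

theorem iterated_integral_identity_general (n k : ℕ) (hn : 1 ≤ n) (x : ℝ) :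
    (∑ σ : Equiv.Perm (Fin n),
      ((Equiv.Perm.sign σ : ℤ) : ℝ) *
        ((Finset.univ.filter fun i => σ i = i).card.factorial : ℝ) /
        (((Finset.univ.filter fun i => σ i = i).card + k).factorial : ℝ) *
        x ^ ((Finset.univ.filter fun i => σ i = i).card + k))
      = Pint n k x := by
  induction k generalizing x with
  | zero =>
    have hfac (m : ℕ) : (m ! : ℝ) / m ! = 1 := div_self (Nat.cast_ne_zero.mpr m.factorial_ne_zero)
    simp only [Nat.add_zero, mul_div_assoc, hfac, mul_one, Pint]
    exact_mod_cast sum_sign_mul_pow_card_fixed hn x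
  | succ k ih =>
    simp only [Pint, ← ih]
    exact (integral_sum_mul_factorial_div_mul_pow _ _ _ k x).symm

theorem iterated_integral_identity (n k : ℕ) (hn : 1 ≤ n) (hk : 1 ≤ k) (x : ℝ) :
    (∑ σ : Equiv.Perm (Fin n),
      ((Equiv.Perm.sign σ : ℤ) : ℝ) *
        ((Finset.univ.filter fun i => σ i = i).card.factorial : ℝ) /
        (((Finset.univ.filter fun i => σ i = i).card + k).factorial : ℝ) *
        x ^ ((Finset.univ.filter fun i => σ i = i).card + k))
      = Pint n k x :=
  iterated_integral_identity_general n k hn x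
end
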